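/- arXiv:1711.02576 — 5 statements merged into one kernel-verified Lean document; each statement's English description precedes it below -/
import Mathlib

section
/- Every unit sparse companion matrix of p in Hessenberg form has characteristic polynomial equal to p. That is, if C is an n×n complex matrix for which there exist an integer m with 0 ≤ m ≤ n−1 and positions (r_k, c_k) for k = 0, …, n−1 satisfying r_k − c_k = k, m+1 ≤ r_k ≤ n and 1 ≤ c_k ≤ m+1, such that C_{i,i+1} = 1 for 1 ≤ i ≤ n−1, C_{r_k,c_k} = −a_{n−1−k} for 0 ≤ k ≤ n−1, and all other entries of C are 0, then the characteristic polynomial of C is p(x). -/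
noncomputable section

/-- Maximum absolute row sum (the `∞`-norm). -/
def infNorm {n : ℕ} (A : Matrix (Fin n) (Fin n) ℂ) : ℝ :=
  ⨆ i, ∑ j, ‖A i j‖

/-- Maximum absolute column sum (the `1`-norm). -/
def oneNorm {n : ℕ} (A : Matrix (Fin n) (Fin n) ℂ) : ℝ :=
  ⨆ j, ∑ i, ‖A i j‖

/-- `N(A) = min {‖A‖_∞, ‖A‖_1}`. -/
def NN {n : ℕ} (A : Matrix (Fin n) (Fin n) ℂ) : ℝ :=
  min (infNorm A) (oneNorm A)

/-- The monic polynomial `p(x) = x^n + a_{n-1}x^{n-1} + ⋯ + a_1 x + a_0`. -/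
def pPoly (n : ℕ) (a : ℕ → ℂ) : Polynomial ℂ :=
  Polynomial.X ^ n + ∑ k ∈ Finset.range n, Polynomial.C (a k) * Polynomial.X ^ k

/-- Coefficients of the monic reversal polynomial `p♯`:
`asharp n a k` is the coefficient of `x^k` in `p♯`, namely `1/a_0` for `k = 0`
and `a_{n-k}/a_0` for `1 ≤ k ≤ n-1`. -/
def asharp (n : ℕ) (a : ℕ → ℂ) : ℕ → ℂ :=
  fun k => if k = 0 then 1 / a 0 else a (n - k) / a 0

/-- A unit sparse companion matrix of `p` in Hessenberg form, with explicit data: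
`m` (0-based; `m + 1 ≤ n`), and 0-based positions `(r k, c k)` (for `k = 0, …, n-1`)
satisfying `r k - c k = k`, `m ≤ r k ≤ n-1`, `0 ≤ c k ≤ m`; the superdiagonal
entries are `1`, the entry at `(r k, c k)` is `-a_{n-1-k}`, and all other entries
are `0`.  (This is the 0-based translation of the 1-based description.) -/
def IsUnitSparseData (n m : ℕ) (a : ℕ → ℂ) (C : Matrix (Fin n) (Fin n) ℂ)
    (r c : Fin n → Fin n) : Prop :=
  m + 1 ≤ n ∧
  (∀ k : Fin n, (r k : ℕ) = (c k : ℕ) + (k : ℕ)) ∧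
  (∀ k : Fin n, m ≤ (r k : ℕ)) ∧
  (∀ k : Fin n, (c k : ℕ) ≤ m) ∧
  (∀ k : Fin n, C (r k) (c k) = -a (n - 1 - (k : ℕ))) ∧
  (∀ i j : Fin n, (j : ℕ) = (i : ℕ) + 1 → C i j = 1) ∧
  (∀ i j : Fin n, (j : ℕ) ≠ (i : ℕ) + 1 →
    (∀ k : Fin n, ¬(r k = i ∧ c k = j)) → C i j = 0)

/-- A unit sparse companion matrix of `p` in Hessenberg form. -/
def IsUnitSparse (n : ℕ) (a : ℕ → ℂ) (C : Matrix (Fin n) (Fin n) ℂ) : Prop :=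
  ∃ (m : ℕ) (r c : Fin n → Fin n), IsUnitSparseData n m a C r c

/-- A Fiedler companion matrix of `p` in Hessenberg form (with explicit position
data): a unit sparse companion matrix such that for `1 ≤ k ≤ n-1`, if `-a_{k-1}`
occupies position `(i,j)` then `-a_k` occupies position `(i-1,j)` or `(i,j+1)`.
Here the coefficient `-a_{n-1-k}` sits at position index `k`, so the coefficient
`-a_{k-1}` has index `k' = n-k` and `-a_k` has index `n-1-k = k' - 1`. -/
def IsFiedlerData (n m : ℕ) (a : ℕ → ℂ) (C : Matrix (Fin n) (Fin n) ℂ)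
    (r c : Fin n → Fin n) : Prop :=
  IsUnitSparseData n m a C r c ∧
  ∀ k k' : Fin n, (k' : ℕ) = (k : ℕ) + 1 →
    ((r k : ℕ) + 1 = (r k' : ℕ) ∧ c k = c k') ∨
    (r k = r k' ∧ (c k : ℕ) = (c k' : ℕ) + 1)

/-- The Frobenius companion matrix of the monic polynomial with coefficients `a`
(0-based: superdiagonal `1`'s and last row `-a_0, -a_1, …, -a_{n-1}`). -/
def Frob (n : ℕ) (a : ℕ → ℂ) : Matrix (Fin n) (Fin n) ℂ :=
  Matrix.of fun i j =>
    if (j : ℕ) = (i : ℕ) + 1 then 1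
    else if (i : ℕ) = n - 1 then -a (j : ℕ)
    else 0

/-- The Fiedler companion matrix `L_b` (0-based translation): superdiagonal `1`'s,
`(L_b)_{i,b} = -a_{n+b-1-i}` for `b ≤ i ≤ n-2`, and `(L_b)_{n-1,j} = -a_j` for
`0 ≤ j ≤ b`; all other entries `0`. -/
def Lmat (n b : ℕ) (a : ℕ → ℂ) : Matrix (Fin n) (Fin n) ℂ :=
  Matrix.of fun i j =>
    if (j : ℕ) = (i : ℕ) + 1 then 1
    else if (i : ℕ) = n - 1 ∧ (j : ℕ) ≤ b then -a (j : ℕ)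
    else if (j : ℕ) = b ∧ b ≤ (i : ℕ) ∧ (i : ℕ) + 2 ≤ n then -a (n + b - 1 - (i : ℕ))
    else 0

/-- The matrix `W` (0-based translation): `W_{0,0} = -a_{n-1}`, `W_{0,n-1} = -a_0`,
`W_{i,i-1} = 1` for `1 ≤ i ≤ n-1`, `W_{i,0} = a_{i-1}/a_0` for `2 ≤ i ≤ n-1`;
all other entries `0`. -/
def Wmat (n : ℕ) (a : ℕ → ℂ) : Matrix (Fin n) (Fin n) ℂ :=
  Matrix.of fun i j =>
    if (i : ℕ) = 0 ∧ (j : ℕ) = 0 then -a (n - 1)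
    else if (i : ℕ) = 0 ∧ (j : ℕ) = n - 1 then -a 0
    else if (i : ℕ) = (j : ℕ) + 1 then 1
    else if 2 ≤ (i : ℕ) ∧ (j : ℕ) = 0 then a ((i : ℕ) - 1) / a 0
    else 0

/-- The matrix `X_b` (0-based translation): `(X_b)_{0,j} = -a_{n-1-j}` for
`0 ≤ j ≤ n-2-b`, `(X_b)_{0,n-1} = -a_0`, `(X_b)_{i,i-1} = 1` for `1 ≤ i ≤ n-2`,
`(X_b)_{n-1,n-2} = 1`, `(X_b)_{n-1,j} = a_{n-2-j}/a_0` for `n-2-b ≤ j ≤ n-3`;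
all other entries `0`. -/
def Xmat (n b : ℕ) (a : ℕ → ℂ) : Matrix (Fin n) (Fin n) ℂ :=
  Matrix.of fun i j =>
    if (i : ℕ) = 0 ∧ (j : ℕ) + b ≤ n - 2 then -a (n - 1 - (j : ℕ))
    else if (i : ℕ) = 0 ∧ (j : ℕ) = n - 1 then -a 0
    else if (i : ℕ) = (j : ℕ) + 1 ∧ (i : ℕ) + 2 ≤ n then 1
    else if (i : ℕ) = n - 1 ∧ (j : ℕ) = n - 2 then 1
    else if (i : ℕ) = n - 1 ∧ n - 2 ≤ (j : ℕ) + b ∧ (j : ℕ) + 3 ≤ n then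
      a (n - 2 - (j : ℕ)) / a 0
    else 0

/-- A matrix `E` of type `E_c(q)` for the monic polynomial with coefficients `b`
(0-based translation of the 1-based description): superdiagonal `1`'s,
`E_{n-1,0} = -b_0`, and positions `(r k, col k)` for `k = 0, …, n-2` with
`r k = col k + k`, `c ≤ r k`, `1 ≤ col k ≤ c`, holding `-b_{n-1-k}`; all other
entries `0`. -/
def IsTypeE (n c : ℕ) (b : ℕ → ℂ) (E : Matrix (Fin n) (Fin n) ℂ) : Prop :=
  ∃ r col : ℕ → Fin n,
    (∀ k : ℕ, k ≤ n - 2 → (r k : ℕ) = (col k : ℕ) + k) ∧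
    (∀ k : ℕ, k ≤ n - 2 → c ≤ (r k : ℕ)) ∧
    (∀ k : ℕ, k ≤ n - 2 → 1 ≤ (col k : ℕ) ∧ (col k : ℕ) ≤ c) ∧
    (∀ k : ℕ, k ≤ n - 2 → E (r k) (col k) = -b (n - 1 - k)) ∧
    (∀ i j : Fin n, (j : ℕ) = (i : ℕ) + 1 → E i j = 1) ∧
    (∀ i j : Fin n, (i : ℕ) = n - 1 → (j : ℕ) = 0 → E i j = -b 0) ∧
    (∀ i j : Fin n, (j : ℕ) ≠ (i : ℕ) + 1 → ¬((i : ℕ) = n - 1 ∧ (j : ℕ) = 0) →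
      (∀ k : ℕ, k ≤ n - 2 → ¬(r k = i ∧ col k = j)) → E i j = 0)

/-- `A` is of type `E_c(p♯)⁻¹`: `A = E⁻¹` for some `E` of type `E_c(p♯)`. -/
def IsTypeEInv (n c : ℕ) (a : ℕ → ℂ) (A : Matrix (Fin n) (Fin n) ℂ) : Prop :=
  ∃ E : Matrix (Fin n) (Fin n) ℂ, IsTypeE n c (asharp n a) E ∧ A = E⁻¹


/-!
Write `M = X - C` for an `N × N` matrix `C` with unit superdiagonal whose other nonzero entries
lie in the corner block `m ≤ i`, `j ≤ m`. Rows `i < m` of `M` are `X eᵢ - eᵢ₊₁` and columns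
`j > m` are `X eⱼ - eⱼ₋₁`. Hence the last column `b` of `adj M` satisfies `bⱼ = Xʲ b₀` for
`j ≤ m`, where `b₀ = 1` because its minor is triangular with `-1` on the diagonal; and the row
vector `uᵢ = X^(N-1-i)` (`i ≥ m`, zero otherwise) has `(u M)ⱼ = 0` for `j > m`. As
`M b = det M · e_{N-1}`, we get `det M = u M b = u M v` with `vⱼ = Xʲ` (`j ≤ m`, zero otherwise),
that is `X^N - ∑ X^(N-1-i) Cᵢⱼ Xʲ` over the corner. In a unit sparse companion matrix the
diagonal `i - j = k` meets the corner only in the entry `-a_{N-1-k}`.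
-/

open Polynomial Matrix

theorem Fin.apply_eq_pow_mul_apply_zero {R : Type*} [Monoid R] {n m : ℕ} {x : R}
    (b : Fin (n + 1) → R) (h : ∀ i : Fin n, (i : ℕ) < m → b i.succ = x * b i.castSucc)
    (j : Fin (n + 1)) (hj : (j : ℕ) ≤ m) : b j = x ^ (j : ℕ) * b 0 := by
  induction j using Fin.induction with
  | zero => simp
  | succ i ih =>
    simp only [Fin.val_succ, Fin.val_castSucc] at hj ih ⊢
    rw [h i (by omega), ih (by omega), pow_succ', mul_assoc]

namespace Matrix

variable {R : Type*} [CommRing R] {n m : ℕ}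

theorem adjugate_zero_last_of_superdiag_eq_neg_one (M : Matrix (Fin (n + 1)) (Fin (n + 1)) R)
    (hsup : ∀ i : Fin n, M i.castSucc i.succ = -1)
    (hzero : ∀ i j : Fin (n + 1), (i : ℕ) + 1 < j → M i j = 0) :
    adjugate M 0 (Fin.last n) = 1 := by
  have hminor : (M.submatrix (Fin.last n).succAbove Fin.succ).det = (-1) ^ n := by
    rw [Fin.succAbove_last,
      det_of_isLowerTriangular (M.submatrix _ _) fun i j hij => hzero _ _ (by simpa using hij)]
    simp [hsup]
  rw [adjugate_apply, det_succ_row _ (Fin.last n), Fintype.sum_eq_single 0]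
  · rw [submatrix_updateRow_succAbove, Fin.succAbove_zero, hminor]
    simp [← pow_add, ← two_mul]
  · intro j hj
    simp [hj]

theorem charmatrix_mulVec {ι : Type*} [Fintype ι] [DecidableEq ι] (C : Matrix ι ι R)
    (w : ι → R[X]) : charmatrix C *ᵥ w = (X : R[X]) • w - C.map Polynomial.C *ᵥ w := by
  simp [charmatrix, sub_mulVec]

structure IsCornerHessenberg (m : ℕ) (C : Matrix (Fin n) (Fin n) R) : Prop where
  superdiag : ∀ i j : Fin n, (j : ℕ) = i + 1 → C i j = 1
  eq_zero : ∀ i j : Fin n, (j : ℕ) ≠ i + 1 → ¬((j : ℕ) ≤ m ∧ m ≤ (i : ℕ)) → C i j = 0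

namespace IsCornerHessenberg

variable {C : Matrix (Fin (n + 1)) (Fin (n + 1)) R}

theorem charmatrix_mulVec_castSucc (hC : C.IsCornerHessenberg m) {i : Fin n} (hi : (i : ℕ) < m)
    (w : Fin (n + 1) → R[X]) :
    (charmatrix C *ᵥ w) i.castSucc = X * w i.castSucc - w i.succ := by
  rw [mulVec, dotProduct, Fintype.sum_eq_add i.castSucc i.succ Fin.castSucc_lt_succ.ne]
  · rw [charmatrix_apply_eq, charmatrix_apply_ne _ _ _ Fin.castSucc_lt_succ.ne,
      hC.superdiag i.castSucc i.succ (by simp), hC.eq_zero i.castSucc i.castSucc (by simp)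
        (by simp; omega), map_zero, map_one]
    ring
  · rintro j ⟨hj, hj'⟩
    rw [charmatrix_apply_ne _ _ _ (Ne.symm hj),
      hC.eq_zero _ _ (fun h => hj' (Fin.ext (by simpa using h))) (by simp; omega)]
    simp

theorem vecMul_charmatrix_eq_zero (hC : C.IsCornerHessenberg m) {j : Fin (n + 1)}
    (hj : m < (j : ℕ)) :
    ((fun i : Fin (n + 1) => if m ≤ (i : ℕ) then X ^ (n - i) else 0) ᵥ* charmatrix C) j = 0 := by
  cases j using Fin.cases with
  | zero => simp at hj
  | succ j =>
    rw [Fin.val_succ] at hj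
    rw [vecMul, dotProduct, Fintype.sum_eq_add j.succ j.castSucc Fin.castSucc_lt_succ.ne']
    · rw [charmatrix_apply_eq, charmatrix_apply_ne _ _ _ Fin.castSucc_lt_succ.ne,
        hC.superdiag j.castSucc j.succ (by simp), hC.eq_zero j.succ j.succ (by simp)
          (by simp; omega)]
      obtain ⟨k, hk⟩ : ∃ k, n - j = k + 1 := ⟨n - j - 1, by omega⟩
      simp only [Fin.val_succ, Fin.val_castSucc, if_pos (by omega : m ≤ (j : ℕ) + 1),
        if_pos (by omega : m ≤ (j : ℕ)), hk, show n - (j + 1) = k by omega, map_zero, map_one]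
      ring
    · rintro i ⟨hi, hi'⟩
      rw [charmatrix_apply_ne _ _ _ hi,
        hC.eq_zero _ _ (fun h => hi' (Fin.ext (by simp at h ⊢; omega))) (by simp; omega)]
      simp

theorem adjugate_charmatrix_zero_last (hC : C.IsCornerHessenberg m) :
    adjugate (charmatrix C) 0 (Fin.last n) = 1 := by
  refine adjugate_zero_last_of_superdiag_eq_neg_one _ (fun i => ?_) fun i j hij => ?_
  · rw [charmatrix_apply_ne _ _ _ Fin.castSucc_lt_succ.ne, hC.superdiag _ _ (by simp), map_one]
  · rw [charmatrix_apply_ne _ _ _ (by rintro rfl; omega), hC.eq_zero _ _ (by omega) (by omega),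
      map_zero, neg_zero]

theorem adjugate_charmatrix_last (hC : C.IsCornerHessenberg m) {j : Fin (n + 1)}
    (hj : (j : ℕ) ≤ m) : adjugate (charmatrix C) j (Fin.last n) = X ^ (j : ℕ) := by
  refine (Fin.apply_eq_pow_mul_apply_zero (x := X) (fun j => adjugate (charmatrix C) j (Fin.last n))
    (fun i hi => ?_) j hj).trans ?_
  · have h := hC.charmatrix_mulVec_castSucc hi fun j => adjugate (charmatrix C) j (Fin.last n)
    change (charmatrix C * adjugate (charmatrix C)) i.castSucc (Fin.last n) = _ at h
    rw [mul_adjugate, smul_apply, one_apply_ne (Fin.castSucc_ne_last i), smul_zero] at h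
    linear_combination h
  · rw [hC.adjugate_charmatrix_zero_last, mul_one]

theorem charpoly_eq (hC : C.IsCornerHessenberg m) (hm : m ≤ n) :
    C.charpoly = X ^ (n + 1) - ∑ i : Fin (n + 1), ∑ j : Fin (n + 1),
      if (j : ℕ) ≤ m ∧ m ≤ (i : ℕ) then Polynomial.C (C i j) * X ^ (n - i + j) else 0 := by
  set b : Fin (n + 1) → R[X] := fun j => adjugate (charmatrix C) j (Fin.last n)
  set u : Fin (n + 1) → R[X] := fun i => if m ≤ (i : ℕ) then X ^ (n - i) else 0
  set v : Fin (n + 1) → R[X] := fun j => if (j : ℕ) ≤ m then X ^ (j : ℕ) else 0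
  have hMb : charmatrix C *ᵥ b = Pi.single (Fin.last n) C.charpoly := by
    funext i
    change (charmatrix C * adjugate (charmatrix C)) i (Fin.last n) = _
    rw [mul_adjugate, smul_apply, one_apply, Pi.single_apply, smul_eq_mul, mul_ite, mul_one,
      mul_zero, charpoly]
  have huv : u ⬝ᵥ v = X ^ n := by
    rw [dotProduct, Fintype.sum_eq_single ⟨m, by omega⟩]
    · simp [u, v, ← pow_add, hm]
    · intro i hi
      have : (i : ℕ) ≠ m := fun h => hi (Fin.ext h)
      rcases Nat.lt_or_gt_of_ne this with hlt | hgt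
      · simp [u, hlt]
      · simp [v, hgt]
  calc C.charpoly = u ⬝ᵥ (charmatrix C *ᵥ b) := by simp [hMb, u, hm]
    _ = (u ᵥ* charmatrix C) ⬝ᵥ b := dotProduct_mulVec ..
    _ = (u ᵥ* charmatrix C) ⬝ᵥ v := by
      refine Finset.sum_congr rfl fun j _ => ?_
      by_cases hj : (j : ℕ) ≤ m
      · simp only [b, v, hC.adjugate_charmatrix_last hj, if_pos hj]
      · rw [hC.vecMul_charmatrix_eq_zero (by omega), zero_mul, zero_mul]
    _ = u ⬝ᵥ (charmatrix C *ᵥ v) := (dotProduct_mulVec ..).symm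
    _ = X * (u ⬝ᵥ v) - u ⬝ᵥ (C.map Polynomial.C *ᵥ v) := by
      rw [charmatrix_mulVec, dotProduct_sub, dotProduct_smul, smul_eq_mul]
    _ = _ := by
      rw [huv, ← pow_succ']
      congr 1
      simp only [dotProduct, mulVec, Finset.mul_sum]
      refine Finset.sum_congr rfl fun i _ => Finset.sum_congr rfl fun j _ => ?_
      by_cases hi : m ≤ (i : ℕ) <;> by_cases hj : (j : ℕ) ≤ m <;> simp [u, v, hi, hj, pow_add]
      ring

end IsCornerHessenberg

end Matrix

namespace IsUnitSparseData

variable {n m : ℕ} {a : ℕ → ℂ}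

theorem isCornerHessenberg {C : Matrix (Fin n) (Fin n) ℂ} {r c : Fin n → Fin n}
    (h : IsUnitSparseData n m a C r c) : C.IsCornerHessenberg m := by
  obtain ⟨-, -, hr, hc, -, hsup, hzero⟩ := h
  exact ⟨hsup, fun i j hj hij => hzero i j hj fun k ⟨hri, hcj⟩ => hij ⟨hcj ▸ hc k, hri ▸ hr k⟩⟩

theorem sum_corner {C : Matrix (Fin (n + 1)) (Fin (n + 1)) ℂ} {r c : Fin (n + 1) → Fin (n + 1)}
    (h : IsUnitSparseData (n + 1) m a C r c) :
    ∑ i : Fin (n + 1), ∑ j : Fin (n + 1),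
      (if (j : ℕ) ≤ m ∧ m ≤ (i : ℕ) then Polynomial.C (C i j) * X ^ (n - i + j) else 0) =
    -∑ k ∈ Finset.range (n + 1), Polynomial.C (a k) * X ^ k := by
  obtain ⟨-, hdiff, hr, hc, hval, -, hzero⟩ := h
  have hinj : Function.Injective fun k => (r k, c k) := by
    intro k l hkl
    obtain ⟨hrkl, hckl⟩ := Prod.mk.inj hkl
    have := hdiff k
    have := hdiff l
    ext
    rw [hrkl, hckl] at *
    omega
  rw [← Fintype.sum_prod_type', ← Finset.sum_subset (Finset.subset_univ
    (Finset.univ.image fun k => (r k, c k))), Finset.sum_image fun k _ l _ hkl => hinj hkl]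
  · rw [← Finset.sum_range_reflect, ← Finset.sum_neg_distrib, ← Fin.sum_univ_eq_sum_range]
    refine Finset.sum_congr rfl fun k _ => ?_
    have := hdiff k
    have := (r k).isLt
    rw [if_pos ⟨hc k, hr k⟩, hval k, map_neg, neg_mul]
    congr 3
    dsimp only
    omega
  · rintro ⟨i, j⟩ - hij
    dsimp only
    split_ifs with hcorner
    · rw [hzero i j (by omega) fun k ⟨hri, hcj⟩ =>
        hij (Finset.mem_image.2 ⟨k, Finset.mem_univ _, by rw [hri, hcj]⟩), map_zero, zero_mul]
    · rfl

end IsUnitSparseData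

theorem stmt0_general (n : ℕ) (a : ℕ → ℂ) (C : Matrix (Fin n) (Fin n) ℂ)
    (hC : IsUnitSparse n a C) :
    C.charpoly = pPoly n a := by
  obtain ⟨m, r, c, hC⟩ := hC
  have hmn := hC.1
  obtain ⟨n, rfl⟩ : ∃ n', n = n' + 1 := ⟨n - 1, by omega⟩
  rw [hC.isCornerHessenberg.charpoly_eq (by omega), hC.sum_corner, pPoly, sub_neg_eq_add]

/-- every unit sparse companion matrix of `p` in Hessenberg form has
characteristic polynomial `p`. -/
theorem stmt0 (n : ℕ) (hn : 2 ≤ n) (a : ℕ → ℂ) (C : Matrix (Fin n) (Fin n) ℂ)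
    (hC : IsUnitSparse n a C) :
    C.charpoly = pPoly n a :=
  stmt0_general n a C hC
end
end

section
/- If λ ∈ ℂ is a root of p and C is a unit sparse companion matrix of p in Hessenberg form, then |λ| ≤ N(C). If moreover a_0 ≠ 0 and D is a unit sparse companion matrix of the monic reversal polynomial p♯ in Hessenberg form, then |λ| ≥ 1/N(D). -/
/-! A root `λ` of `p` is an eigenvalue of every unit sparse companion matrix `C` of `p`: with
`vᵢ = λ^i + ∑_{r_k < i} a_{n-1-k} λ^{i-1-k}` one has `C v = λ v`, because `vⱼ = λ^j` on the
columns `j ≤ m` that hold coefficients, and the formula extended to `i = n` gives `p(λ) = 0`.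
By Gershgorin every eigenvalue is bounded by the largest row sum, and, as `Cᵀ` has the same
eigenvalues, by the largest column sum. For the lower bound, `λ⁻¹` is a root of `p♯`. -/

noncomputable section

open Module.End Matrix

section EigenvalueBounds

variable {n : ℕ} {A : Matrix (Fin n) (Fin n) ℂ} {μ : ℂ}

lemma norm_le_infNorm_of_hasEigenvalue (h : HasEigenvalue (toLin' A) μ) :
    ‖μ‖ ≤ infNorm A := by
  obtain ⟨i, hi⟩ := eigenvalue_mem_ball h
  rw [Metric.mem_closedBall, dist_eq_norm] at hi
  calc ‖μ‖ ≤ ‖A i i‖ + ‖μ - A i i‖ := norm_le_norm_add_norm_sub' μ (A i i)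
    _ ≤ ∑ j, ‖A i j‖ := by
      rw [← Finset.add_sum_erase _ _ (Finset.mem_univ i)]; gcongr
    _ ≤ infNorm A := le_ciSup (f := fun i => ∑ j, ‖A i j‖) (Set.finite_range _).bddAbove i

lemma hasEigenvalue_transpose (h : HasEigenvalue (toLin' A) μ) :
    HasEigenvalue (toLin' Aᵀ) μ := by
  rwa [hasEigenvalue_iff_isRoot_charpoly, Matrix.charpoly_toLin', charpoly_transpose,
    ← Matrix.charpoly_toLin', ← hasEigenvalue_iff_isRoot_charpoly]

lemma norm_le_NN_of_hasEigenvalue (h : HasEigenvalue (toLin' A) μ) : ‖μ‖ ≤ NN A :=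
  le_min (norm_le_infNorm_of_hasEigenvalue h)
    (norm_le_infNorm_of_hasEigenvalue (hasEigenvalue_transpose h))

lemma hasEigenvalue_of_mulVec_eq_smul {v : Fin n → ℂ} (hv : v ≠ 0) (h : A *ᵥ v = μ • v) :
    HasEigenvalue (toLin' A) μ :=
  hasEigenvalue_of_hasEigenvector (x := v) ⟨mem_eigenspace_iff.mpr h, hv⟩

end EigenvalueBounds

def upperShift (n : ℕ) : Matrix (Fin n) (Fin n) ℂ :=
  of fun i j => if (j : ℕ) = i + 1 then 1 else 0

-- `V n = 0` stands in for the superdiagonal entry that the last row lacks.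
lemma upperShift_mulVec_apply {n : ℕ} (V : ℕ → ℂ) (hV : V n = 0) (i : Fin n) :
    (upperShift n *ᵥ fun j => V j) i = V (i + 1) := by
  simp only [upperShift, mulVec, dotProduct, of_apply, ite_mul, one_mul, zero_mul]
  rw [Fin.sum_univ_eq_sum_range (fun j => if j = i + 1 then V j else 0), Finset.sum_ite_eq']
  split_ifs with h
  · rfl
  · rw [show (i : ℕ) + 1 = n by have := Finset.mem_range.not.mp h; omega, hV]

section UnitSparse

variable {n m : ℕ} {a : ℕ → ℂ} {C : Matrix (Fin n) (Fin n) ℂ} {r c : Fin n → Fin n}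

lemma IsUnitSparse.pos (hC : IsUnitSparse n a C) : 0 < n := by
  obtain ⟨m, _, _, h⟩ := hC
  exact (Nat.succ_pos m).trans_le h.1

lemma IsUnitSparseData.eq_sub_sum_single (h : IsUnitSparseData n m a C r c) :
    C = upperShift n - ∑ k, single (r k) (c k) (a (n - 1 - k)) := by
  obtain ⟨-, hrc, -, -, hval, hsup, hzero⟩ := h
  have hinj : ∀ k k', r k = r k' → c k = c k' → k = k' := fun k k' h1 h2 =>
    Fin.ext (by have := hrc k; have := hrc k'; rw [h1, h2] at *; omega)
  ext i j
  simp only [upperShift, Matrix.sub_apply, of_apply, Matrix.sum_apply, single_apply]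
  by_cases hij : (j : ℕ) = i + 1
  · rw [hsup i j hij, if_pos hij, Finset.sum_eq_zero, sub_zero]
    rintro k -
    rw [if_neg]
    rintro ⟨rfl, rfl⟩
    have := hrc k
    omega
  rw [if_neg hij, zero_sub]
  by_cases hex : ∃ k, r k = i ∧ c k = j
  · obtain ⟨k, rfl, rfl⟩ := hex
    rw [hval, Finset.sum_eq_single k (fun k' _ hk' => if_neg fun h => hk' (hinj _ _ h.1 h.2))
      (by simp), if_pos ⟨rfl, rfl⟩]
  · push Not at hex
    rw [hzero i j hij fun k hk => hex k hk.1 hk.2, Finset.sum_eq_zero, neg_zero]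
    exact fun k _ => if_neg fun hk => hex k hk.1 hk.2

lemma IsUnitSparseData.mulVec_apply (h : IsUnitSparseData n m a C r c) (V : ℕ → ℂ)
    (hV : V n = 0) (i : Fin n) :
    (C *ᵥ fun j => V j) i = V (i + 1) - ∑ k with (r k : ℕ) = i, a (n - 1 - k) * V (c k) := by
  rw [h.eq_sub_sum_single, sub_mulVec, sum_mulVec, Pi.sub_apply, upperShift_mulVec_apply V hV,
    Finset.sum_apply, Finset.sum_filter]
  simp only [single_mulVec, Function.update_apply, Pi.zero_apply, eq_comm, Fin.val_inj]

end UnitSparse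

section Polynomial

variable {n : ℕ} {a : ℕ → ℂ}

lemma pPoly_eval_eq_sum_range_succ (x : ℂ) :
    (pPoly n a).eval x = ∑ k ∈ Finset.range (n + 1), (if k < n then a k else 1) * x ^ k := by
  rw [Finset.sum_range_succ, if_neg (lt_irrefl n), one_mul, add_comm]
  simp only [pPoly, Polynomial.eval_add, Polynomial.eval_pow, Polynomial.eval_X,
    Polynomial.eval_finsetSum, Polynomial.eval_mul, Polynomial.eval_C]
  exact congrArg _ (Finset.sum_congr rfl fun k hk => by rw [if_pos (Finset.mem_range.mp hk)])

lemma pPoly_eval_eq_sum_fin (x : ℂ) :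
    (pPoly n a).eval x = x ^ n + ∑ k : Fin n, a (n - 1 - k) * x ^ (n - 1 - k) := by
  rw [Fin.sum_univ_eq_sum_range (fun k => a (n - 1 - k) * x ^ (n - 1 - k)),
    Finset.sum_range_reflect (fun k => a k * x ^ k)]
  simp [pPoly, Polynomial.eval_finsetSum]

lemma pPoly_eval_zero (hn : 0 < n) : (pPoly n a).eval 0 = a 0 := by
  simp [pPoly, Polynomial.eval_finsetSum, zero_pow_eq, hn.ne', Finset.sum_ite_eq', hn]

lemma pPoly_asharp_eval_inv (hn : 0 < n) (ha : a 0 ≠ 0) {x : ℂ} (hx : x ≠ 0) :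
    (pPoly n (asharp n a)).eval x⁻¹ = (pPoly n a).eval x / (a 0 * x ^ n) := by
  rw [pPoly_eval_eq_sum_range_succ, pPoly_eval_eq_sum_range_succ,
    eq_div_iff (mul_ne_zero ha (pow_ne_zero n hx)), Finset.sum_mul,
    ← Finset.sum_range_reflect (fun k => (if k < n then a k else 1) * x ^ k)]
  refine Finset.sum_congr rfl fun k hk => ?_
  have hkn : k ≤ n := Nat.lt_succ_iff.mp (Finset.mem_range.mp hk)
  have hcoef :
      (if k < n then asharp n a k else 1) * a 0 = if n - k < n then a (n - k) else 1 := by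
    unfold asharp
    rcases Nat.eq_zero_or_pos k with rfl | hk0
    · simp [ha, hn.ne']
    rcases hkn.lt_or_eq with hlt | rfl
    · simp [hlt, hk0.ne', ha, show n - k < n by omega]
    · simp [hn]
  rw [add_tsub_cancel_right, ← hcoef, inv_pow, pow_sub₀ x hx hkn]
  field_simp

end Polynomial

section Eigenvector

variable {n m : ℕ} {a : ℕ → ℂ} {C : Matrix (Fin n) (Fin n) ℂ} {r c : Fin n → Fin n} {lam : ℂ}

def sparseEigenvector (n : ℕ) (a : ℕ → ℂ) (r : Fin n → Fin n) (lam : ℂ) (i : ℕ) : ℂ :=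
  lam ^ i + ∑ k with (r k : ℕ) < i, a (n - 1 - k) * lam ^ (i - 1 - k)

lemma sparseEigenvector_of_le {i : ℕ} (hi : ∀ k, i ≤ (r k : ℕ)) :
    sparseEigenvector n a r lam i = lam ^ i := by
  rw [sparseEigenvector, Finset.sum_eq_zero, add_zero]
  intro k hk
  exact absurd (hi k) (not_le.mpr (Finset.mem_filter.mp hk).2)

lemma sparseEigenvector_succ (hr : ∀ k : Fin n, (k : ℕ) ≤ r k) (i : ℕ) :
    sparseEigenvector n a r lam (i + 1) = lam * sparseEigenvector n a r lam i
      + ∑ k with (r k : ℕ) = i, a (n - 1 - k) * lam ^ (i - k) := by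
  have hsplit : ∀ f : Fin n → ℂ, ∑ k with (r k : ℕ) < i + 1, f k
      = ∑ k with (r k : ℕ) < i, f k + ∑ k with (r k : ℕ) = i, f k := fun f => by
    rw [← Finset.sum_union (Finset.disjoint_filter.mpr fun k _ h => h.ne), ← Finset.filter_or]
    simp only [Nat.lt_succ_iff_lt_or_eq]
  rw [sparseEigenvector, sparseEigenvector, hsplit, mul_add, Finset.mul_sum, ← pow_succ', add_assoc]
  congr 2
  refine Finset.sum_congr rfl fun k hk => ?_
  have hki : (k : ℕ) < i := (hr k).trans_lt (Finset.mem_filter.mp hk).2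
  rw [mul_left_comm, ← pow_succ', show i - 1 - k + 1 = i + 1 - 1 - k by omega]

lemma sparseEigenvector_self : sparseEigenvector n a r lam n = (pPoly n a).eval lam := by
  rw [sparseEigenvector, pPoly_eval_eq_sum_fin, Finset.filter_true_of_mem fun k _ => (r k).isLt]

lemma IsUnitSparseData.mulVec_sparseEigenvector (h : IsUnitSparseData n m a C r c)
    (hroot : (pPoly n a).eval lam = 0) :
    C *ᵥ (fun i : Fin n => sparseEigenvector n a r lam i)
      = lam • fun i : Fin n => sparseEigenvector n a r lam i := by
  have ⟨_, hrc, hmr, hcm, _⟩ := h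
  ext i
  rw [h.mulVec_apply _ (sparseEigenvector_self.trans hroot),
    sparseEigenvector_succ (fun k => by rw [hrc k]; omega), add_sub_assoc, sub_eq_zero.mpr,
    add_zero, Pi.smul_apply, smul_eq_mul]
  refine Finset.sum_congr rfl fun k hk => ?_
  have hck : (c k : ℕ) = i - k := by rw [← (Finset.mem_filter.mp hk).2, hrc k]; omega
  rw [sparseEigenvector_of_le fun k' => (hcm k).trans (hmr k'), hck]

lemma IsUnitSparse.hasEigenvalue (hC : IsUnitSparse n a C) (hroot : (pPoly n a).eval lam = 0) :
    HasEigenvalue (toLin' C) lam := by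
  have hn := hC.pos
  obtain ⟨m, r, c, h⟩ := hC
  refine hasEigenvalue_of_mulVec_eq_smul (fun h0 => ?_) (h.mulVec_sparseEigenvector hroot)
  have := congrFun h0 ⟨0, hn⟩
  simp [sparseEigenvector_of_le fun k => Nat.zero_le (r k : ℕ)] at this

end Eigenvector

theorem stmt1_general (n : ℕ) (a : ℕ → ℂ) (lam : ℂ)
    (hroot : (pPoly n a).eval lam = 0) :
    (∀ C : Matrix (Fin n) (Fin n) ℂ, IsUnitSparse n a C → ‖lam‖ ≤ NN C) ∧
    (a 0 ≠ 0 → ∀ D : Matrix (Fin n) (Fin n) ℂ, IsUnitSparse n (asharp n a) D →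
      1 / NN D ≤ ‖lam‖) := by
  refine ⟨fun C hC => norm_le_NN_of_hasEigenvalue (hC.hasEigenvalue hroot), fun ha D hD => ?_⟩
  have hlam : lam ≠ 0 := by
    rintro rfl
    exact ha (by rwa [pPoly_eval_zero hD.pos] at hroot)
  have hsharp : (pPoly n (asharp n a)).eval lam⁻¹ = 0 := by
    rw [pPoly_asharp_eval_inv hD.pos ha hlam, hroot, zero_div]
  have hle := norm_le_NN_of_hasEigenvalue (hD.hasEigenvalue hsharp)
  rw [norm_inv] at hle
  rw [one_div]
  exact inv_le_of_inv_le₀ (norm_pos_iff.mpr hlam) hle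

/-- if `λ` is a root of `p` then `|λ| ≤ N(C)` for any unit sparse
companion matrix `C` of `p`, and if moreover `a_0 ≠ 0` then `1/N(D) ≤ |λ|` for any
unit sparse companion matrix `D` of the monic reversal polynomial `p♯`. -/
theorem stmt1 (n : ℕ) (hn : 2 ≤ n) (a : ℕ → ℂ) (lam : ℂ)
    (hroot : (pPoly n a).eval lam = 0) :
    (∀ C : Matrix (Fin n) (Fin n) ℂ, IsUnitSparse n a C → ‖lam‖ ≤ NN C) ∧
    (a 0 ≠ 0 → ∀ D : Matrix (Fin n) (Fin n) ℂ, IsUnitSparse n (asharp n a) D →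
      1 / NN D ≤ ‖lam‖) :=
  stmt1_general n a lam hroot

end
end

section
/- Let F be the Frobenius companion matrix of p and let C be a unit sparse companion matrix of p in Hessenberg form. If N(C) < N(F), then |a_0| < 1. -/
noncomputable section

/-!
If `‖a₀‖ ≥ 1`, every column sum of the Frobenius matrix `F` is dominated both by a row sum and
by a column sum of `C`. Column `0` of `F` sums to `‖a₀‖`, and `C` also contains `-a₀`. Column
`j ≥ 1` sums to `1 + ‖aⱼ‖`; in `C` the entry `-aⱼ` shares its row either with a superdiagonal `1`
or (in the last row) with `-a₀`, of modulus at least `1`, and likewise its column (with `-a₀` in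
column `0`). Hence `N(F) ≤ ‖F‖₁ ≤ N(C)`.
-/

open Finset

theorem norm_add_norm_le_sum_norm {ι E : Type*} [Fintype ι] [SeminormedAddCommGroup E]
    (f : ι → E) {i j : ι} (hij : i ≠ j) : ‖f i‖ + ‖f j‖ ≤ ∑ k, ‖f k‖ := by
  classical
  rw [← sum_pair (f := fun k => ‖f k‖) hij]
  exact sum_le_sum_of_subset_of_nonneg (subset_univ _) fun k _ _ => norm_nonneg _

theorem norm_le_sum_norm {ι E : Type*} [Fintype ι] [SeminormedAddCommGroup E]
    (f : ι → E) (i : ι) : ‖f i‖ ≤ ∑ k, ‖f k‖ :=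
  single_le_sum (fun k _ => norm_nonneg (f k)) (mem_univ i)

section Norms

variable {n : ℕ} (A : Matrix (Fin n) (Fin n) ℂ)

theorem sum_norm_row_le_infNorm (i : Fin n) : ∑ j, ‖A i j‖ ≤ infNorm A :=
  le_ciSup (f := fun i => ∑ j, ‖A i j‖) (Set.finite_range _).bddAbove i

theorem sum_norm_col_le_oneNorm (j : Fin n) : ∑ i, ‖A i j‖ ≤ oneNorm A :=
  le_ciSup (f := fun j => ∑ i, ‖A i j‖) (Set.finite_range _).bddAbove j

end Norms

theorem sum_norm_frob_col_le (n : ℕ) (a : ℕ → ℂ) (j : Fin n) :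
    ∑ i, ‖Frob n a i j‖ ≤ (if (j : ℕ) = 0 then 0 else 1) + ‖a j‖ := by
  have hentry : ∀ i : Fin n, ‖Frob n a i j‖ ≤
      (if (j : ℕ) = (i : ℕ) + 1 then 1 else 0) + (if (i : ℕ) = n - 1 then ‖a j‖ else 0) := by
    intro i
    simp only [Frob, Matrix.of_apply]
    split_ifs <;> simp
  have hsuper : ∑ i : Fin n, (if (j : ℕ) = (i : ℕ) + 1 then (1 : ℝ) else 0) ≤
      if (j : ℕ) = 0 then 0 else 1 := by
    rw [sum_boole]
    split_ifs with hj
    · simp [hj]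
    · refine Nat.cast_le_one.mpr (card_le_one.mpr fun i hi i' hi' => Fin.ext ?_)
      simp only [mem_filter] at hi hi'
      omega
  have hlast : ∑ i : Fin n, (if (i : ℕ) = n - 1 then ‖a j‖ else 0) ≤ ‖a j‖ := by
    rw [sum_ite, sum_const_zero, add_zero, sum_const, nsmul_eq_mul]
    refine mul_le_of_le_one_left (norm_nonneg _) (Nat.cast_le_one.mpr ?_)
    refine card_le_one.mpr fun i hi i' hi' => Fin.ext ?_
    simp only [mem_filter] at hi hi'
    omega
  calc ∑ i, ‖Frob n a i j‖
      ≤ ∑ i : Fin n, ((if (j : ℕ) = (i : ℕ) + 1 then 1 else 0) +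
          (if (i : ℕ) = n - 1 then ‖a j‖ else 0)) := sum_le_sum fun i _ => hentry i
    _ ≤ _ := by rw [sum_add_distrib]; exact add_le_add hsuper hlast

namespace IsUnitSparseData

variable {n m : ℕ} {a : ℕ → ℂ} {C : Matrix (Fin n) (Fin n) ℂ} {r c : Fin n → Fin n}

theorem apply_of_val_eq_succ (h : IsUnitSparseData n m a C r c) {i j : Fin n}
    (hij : (j : ℕ) = i + 1) : C i j = 1 :=
  h.2.2.2.2.2.1 i j hij

theorem exists_entry_eq (h : IsUnitSparseData n m a C r c) (j : Fin n) :
    ∃ k : Fin n, C (r k) (c k) = -a j ∧ (r k : ℕ) = c k + (n - 1 - j) := by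
  refine ⟨⟨n - 1 - j, by omega⟩, ?_, h.2.1 _⟩
  have hk := h.2.2.2.2.1 ⟨n - 1 - j, by omega⟩
  rwa [show n - 1 - (n - 1 - (j : ℕ)) = j by omega] at hk

theorem apply_last_zero (h : IsUnitSparseData n m a C r c) {i j : Fin n}
    (hi : (i : ℕ) = n - 1) (hj : (j : ℕ) = 0) : C i j = -a 0 := by
  obtain ⟨k, hk, hrc⟩ := h.exists_entry_eq j
  have hr : r k = i := Fin.ext (by omega)
  have hc : c k = j := Fin.ext (by omega)
  rwa [hr, hc, hj] at hk

theorem exists_row_sum_ge (h : IsUnitSparseData n m a C r c) (ha : 1 ≤ ‖a 0‖) (j : Fin n) :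
    ∃ i, (if (j : ℕ) = 0 then 0 else 1) + ‖a j‖ ≤ ∑ l, ‖C i l‖ := by
  obtain ⟨k, hk, hrc⟩ := h.exists_entry_eq j
  have hnorm : ‖C (r k) (c k)‖ = ‖a j‖ := by rw [hk, norm_neg]
  refine ⟨r k, ?_⟩
  by_cases hj : (j : ℕ) = 0
  · simpa [hj, hnorm] using norm_le_sum_norm (C (r k)) (c k)
  rw [if_neg hj]
  by_cases hlast : (r k : ℕ) = n - 1
  · have hne : c k ≠ ⟨0, by omega⟩ := Fin.ne_of_val_ne (by dsimp only; omega)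
    calc 1 + ‖a j‖ ≤ ‖C (r k) (c k)‖ + ‖C (r k) ⟨0, by omega⟩‖ := by
          rw [h.apply_last_zero (j := ⟨0, by omega⟩) hlast rfl, norm_neg, hnorm]; linarith
      _ ≤ _ := norm_add_norm_le_sum_norm _ hne
  · have hne : c k ≠ ⟨r k + 1, by omega⟩ := Fin.ne_of_val_ne (by dsimp only; omega)
    calc 1 + ‖a j‖ = ‖C (r k) (c k)‖ + ‖C (r k) ⟨r k + 1, by omega⟩‖ := by
          rw [h.apply_of_val_eq_succ (j := ⟨r k + 1, by omega⟩) rfl, norm_one, hnorm, add_comm]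
      _ ≤ _ := norm_add_norm_le_sum_norm _ hne

theorem exists_col_sum_ge (h : IsUnitSparseData n m a C r c) (ha : 1 ≤ ‖a 0‖) (j : Fin n) :
    ∃ l, (if (j : ℕ) = 0 then 0 else 1) + ‖a j‖ ≤ ∑ i, ‖C i l‖ := by
  obtain ⟨k, hk, hrc⟩ := h.exists_entry_eq j
  have hnorm : ‖C (r k) (c k)‖ = ‖a j‖ := by rw [hk, norm_neg]
  refine ⟨c k, ?_⟩
  by_cases hj : (j : ℕ) = 0
  · simpa [hj, hnorm] using norm_le_sum_norm (C · (c k)) (r k)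
  rw [if_neg hj]
  by_cases hfirst : (c k : ℕ) = 0
  · have hne : r k ≠ ⟨n - 1, by omega⟩ := Fin.ne_of_val_ne (by dsimp only; omega)
    calc 1 + ‖a j‖ ≤ ‖C (r k) (c k)‖ + ‖C ⟨n - 1, by omega⟩ (c k)‖ := by
          rw [h.apply_last_zero (i := ⟨n - 1, by omega⟩) rfl hfirst, norm_neg, hnorm]; linarith
      _ ≤ _ := norm_add_norm_le_sum_norm (C · (c k)) hne
  · have hne : r k ≠ ⟨c k - 1, by omega⟩ := Fin.ne_of_val_ne (by dsimp only; omega)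
    calc 1 + ‖a j‖ = ‖C (r k) (c k)‖ + ‖C ⟨c k - 1, by omega⟩ (c k)‖ := by
          rw [h.apply_of_val_eq_succ (i := ⟨c k - 1, by omega⟩) (by dsimp only; omega), norm_one,
            hnorm, add_comm]
      _ ≤ _ := norm_add_norm_le_sum_norm (C · (c k)) hne

theorem oneNorm_frob_le_infNorm (h : IsUnitSparseData n m a C r c) (ha : 1 ≤ ‖a 0‖) :
    oneNorm (Frob n a) ≤ infNorm C := by
  have : Nonempty (Fin n) := ⟨⟨0, by have := h.1; omega⟩⟩
  refine ciSup_le fun j => ?_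
  obtain ⟨i, hi⟩ := h.exists_row_sum_ge ha j
  exact (sum_norm_frob_col_le n a j).trans (hi.trans (sum_norm_row_le_infNorm C i))

theorem oneNorm_frob_le_oneNorm (h : IsUnitSparseData n m a C r c) (ha : 1 ≤ ‖a 0‖) :
    oneNorm (Frob n a) ≤ oneNorm C := by
  have : Nonempty (Fin n) := ⟨⟨0, by have := h.1; omega⟩⟩
  refine ciSup_le fun j => ?_
  obtain ⟨l, hl⟩ := h.exists_col_sum_ge ha j
  exact (sum_norm_frob_col_le n a j).trans (hl.trans (sum_norm_col_le_oneNorm C l))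

end IsUnitSparseData

theorem IsUnitSparse.NN_frob_le {n : ℕ} {a : ℕ → ℂ} {C : Matrix (Fin n) (Fin n) ℂ}
    (hC : IsUnitSparse n a C) (ha : 1 ≤ ‖a 0‖) : NN (Frob n a) ≤ NN C := by
  obtain ⟨m, r, c, h⟩ := hC
  exact (min_le_right _ _).trans
    (le_min (IsUnitSparseData.oneNorm_frob_le_infNorm h ha)
      (IsUnitSparseData.oneNorm_frob_le_oneNorm h ha))

theorem stmt2_general (n : ℕ) (a : ℕ → ℂ) (C : Matrix (Fin n) (Fin n) ℂ)
    (hC : IsUnitSparse n a C) (hlt : NN C < NN (Frob n a)) :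
    ‖a 0‖ < 1 :=
  lt_of_not_ge fun ha => hlt.not_ge (hC.NN_frob_le ha)

/-- if `N(C) < N(F)` for a unit sparse companion matrix `C` of `p`,
then `|a_0| < 1`. -/
theorem stmt2 (n : ℕ) (hn : 2 ≤ n) (a : ℕ → ℂ) (C : Matrix (Fin n) (Fin n) ℂ)
    (hC : IsUnitSparse n a C) (hlt : NN C < NN (Frob n a)) :
    ‖a 0‖ < 1 :=
  stmt2_general n a C hC hlt

end
end

section
/- Let M = max{|a_k| : 1 ≤ k ≤ n−1} and let u be the number of indices k ∈ {1, …, n−1} with |a_k| = M. If there exists a unit sparse companion matrix C of p in Hessenberg form such that N(C) < N(F), where F is the Frobenius companion matrix of p, then (u−1)·M < 1 − |a_0|. -/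
noncomputable section

/-!
Suppose `(u - 1) M ≥ 1 - ‖a₀‖`. The column sums of `F` are `‖a₀‖` and `1 + ‖a_j‖`, so
`N(F) ≤ max ‖a₀‖ (1 + M)`, while every unit sparse companion matrix `C` has
`N(C) ≥ max ‖a₀‖ (1 + M)`. Indeed, the entry `-a₀` of `C` sits in the bottom-left corner.
A coefficient of modulus `M` outside the last row shares its row with a superdiagonal `1`,
which gives a row sum `≥ 1 + M`; if all `u` of them lie in the last row, that row also
contains `-a₀`, and its sum is `≥ ‖a₀‖ + u M ≥ 1 + M`. Column sums reduce to row sums, since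
reflecting `C` in its antidiagonal gives again a unit sparse companion matrix of `p`.
-/

open scoped Matrix

lemma sum_norm_le_infNorm {n : ℕ} (A : Matrix (Fin n) (Fin n) ℂ) (i : Fin n)
    (s : Finset (Fin n)) : ∑ j ∈ s, ‖A i j‖ ≤ infNorm A :=
  (Finset.sum_le_sum_of_subset_of_nonneg s.subset_univ fun _ _ _ => norm_nonneg _).trans
    (le_ciSup (f := fun i => ∑ j, ‖A i j‖) (Set.finite_range _).bddAbove i)

def antitranspose {n : ℕ} (A : Matrix (Fin n) (Fin n) ℂ) : Matrix (Fin n) (Fin n) ℂ :=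
  Aᵀ.submatrix Fin.rev Fin.rev

lemma oneNorm_eq_infNorm_antitranspose {n : ℕ} (A : Matrix (Fin n) (Fin n) ℂ) :
    oneNorm A = infNorm (antitranspose A) := by
  simp only [oneNorm, infNorm, antitranspose, Matrix.submatrix_apply, Matrix.transpose_apply]
  rw [← Fin.revPerm.iSup_comp]
  congr 1
  ext i
  exact (Fintype.sum_equiv Fin.revPerm _ _ fun _ => rfl).symm

lemma sum_norm_frob_col {n : ℕ} (a : ℕ → ℂ) (j : Fin n) :
    ∑ i, ‖Frob n a i j‖ = (if (j : ℕ) = 0 then 0 else 1) + ‖a j‖ := by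
  have hn : 0 < n := j.pos
  have hentry : ∀ i : Fin n, ‖Frob n a i j‖ =
      (if (j : ℕ) = 0 then 0 else if i = ⟨j - 1, by omega⟩ then 1 else 0) +
        (if i = ⟨n - 1, by omega⟩ then ‖a j‖ else 0) := by
    intro i
    simp only [Frob, Matrix.of_apply, Fin.ext_iff]
    split_ifs <;> first | omega | simp
  rw [Finset.sum_congr rfl fun i _ => hentry i, Finset.sum_add_distrib]
  split_ifs <;> simp

lemma oneNorm_frob_le {n : ℕ} {a : ℕ → ℂ} {M : ℝ}
    (hM : ∀ j : Fin n, (j : ℕ) ≠ 0 → ‖a j‖ ≤ M) :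
    oneNorm (Frob n a) ≤ max ‖a 0‖ (1 + M) := by
  refine Real.iSup_le (fun j => ?_) ((norm_nonneg _).trans (le_max_left _ _))
  rw [sum_norm_frob_col]
  split_ifs with hj
  · simp [hj]
  · linarith [hM j hj, le_max_right ‖a 0‖ (1 + M)]

lemma card_fin_filter_eq_card_Icc_filter {n : ℕ} (p : ℕ → Prop) [DecidablePred p] :
    ({j | (j : ℕ) ≠ 0 ∧ p j} : Finset (Fin n)).card =
      ((Finset.Icc 1 (n - 1)).filter p).card := by
  rw [← Finset.card_map Fin.valEmbedding]
  congr 1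
  ext k
  simp only [Finset.mem_map, Finset.mem_filter, Finset.mem_univ, true_and,
    Fin.valEmbedding_apply, Finset.mem_Icc]
  constructor
  · rintro ⟨j, ⟨hj0, hjp⟩, rfl⟩
    exact ⟨⟨by omega, by omega⟩, hjp⟩
  · rintro ⟨⟨hk1, hkn⟩, hkp⟩
    exact ⟨⟨k, by omega⟩, ⟨Nat.one_le_iff_ne_zero.mp hk1, hkp⟩, rfl⟩

namespace IsUnitSparseData

variable {n m : ℕ} {a : ℕ → ℂ} {C : Matrix (Fin n) (Fin n) ℂ} {r c : Fin n → Fin n}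

lemma antitranspose (h : IsUnitSparseData n m a C r c) :
    IsUnitSparseData n (n - 1 - m) a (_root_.antitranspose C) (Fin.rev ∘ c) (Fin.rev ∘ r) := by
  obtain ⟨hm, hrc, hmr, hcm, hcoef, hsup, hzero⟩ := h
  refine ⟨by omega, fun k => ?_, fun k => ?_, fun k => ?_, fun k => ?_, fun i j hij => ?_,
    fun i j hij hk => ?_⟩
  · simp only [Function.comp_apply, Fin.val_rev]
    have := hrc k
    have := (r k).isLt
    omega
  · simp only [Function.comp_apply, Fin.val_rev]
    have := hcm k
    omega
  · simp only [Function.comp_apply, Fin.val_rev]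
    have := hmr k
    omega
  · simpa [_root_.antitranspose] using hcoef k
  · refine hsup _ _ ?_
    simp only [Fin.val_rev]
    omega
  · refine hzero _ _ ?_ fun k hrck => hk k ?_
    · simp only [Fin.val_rev]
      omega
    · simp [hrck.1, hrck.2]

lemma apply_rev (h : IsUnitSparseData n m a C r c) (j : Fin n) :
    C (r j.rev) (c j.rev) = -a j := by
  obtain ⟨-, -, -, -, hcoef, -⟩ := h
  rw [hcoef]
  congr 2
  simp only [Fin.val_rev]
  omega

lemma one_add_norm_le_infNorm (h : IsUnitSparseData n m a C r c) (j : Fin n)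
    (hj : (r j.rev : ℕ) + 1 < n) : 1 + ‖a j‖ ≤ infNorm C := by
  have hcoef := h.apply_rev j
  obtain ⟨-, -, hmr, hcm, -, hsup, -⟩ := h
  have hne : (⟨r j.rev + 1, hj⟩ : Fin n) ≠ c j.rev := by
    rw [ne_eq, Fin.ext_iff, Fin.val_mk]
    have := hmr j.rev
    have := hcm j.rev
    omega
  calc 1 + ‖a j‖ = ‖C (r j.rev) ⟨r j.rev + 1, hj⟩‖ + ‖C (r j.rev) (c j.rev)‖ := by
        rw [hsup _ _ rfl, hcoef, norm_one, norm_neg]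
    _ = ∑ x ∈ {⟨r j.rev + 1, hj⟩, c j.rev}, ‖C (r j.rev) x‖ :=
        (Finset.sum_pair (f := fun x => ‖C (r j.rev) x‖) hne).symm
    _ ≤ infNorm C := sum_norm_le_infNorm C _ _

lemma sum_norm_le_infNorm_of_row (h : IsUnitSparseData n m a C r c) {s : Finset (Fin n)}
    {i : Fin n} (hs : ∀ j ∈ s, r j.rev = i) : ∑ j ∈ s, ‖a j‖ ≤ infNorm C := by
  have hinj : Set.InjOn (c ∘ Fin.rev) s := by
    intro j hj j' hj' hcc
    have h1 := h.2.1 j.rev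
    have h2 := h.2.1 j'.rev
    rw [hs j hj] at h1
    rw [hs j' hj'] at h2
    have : (c j.rev : ℕ) = c j'.rev := congrArg Fin.val hcc
    exact Fin.rev_injective (Fin.ext (by omega))
  calc ∑ j ∈ s, ‖a j‖ = ∑ j ∈ s, ‖C i (c j.rev)‖ :=
        Finset.sum_congr rfl fun j hj => by rw [← hs j hj, h.apply_rev, norm_neg]
    _ = ∑ x ∈ s.image (c ∘ Fin.rev), ‖C i x‖ :=
        (Finset.sum_image (f := fun x => ‖C i x‖) hinj).symm
    _ ≤ infNorm C := sum_norm_le_infNorm C _ _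

lemma max_le_infNorm (h : IsUnitSparseData n m a C r c) {S : Finset (Fin n)} {M : ℝ}
    (hS : ∀ j ∈ S, (j : ℕ) ≠ 0 ∧ ‖a j‖ = M) :
    max ‖a 0‖ (min (1 + M) (‖a 0‖ + S.card * M)) ≤ infNorm C := by
  have hn : 0 < n := by have := h.1; omega
  set j₀ : Fin n := ⟨0, hn⟩
  set last : Fin n := ⟨n - 1, by omega⟩
  have hrow₀ : r j₀.rev = last := by
    have hrc := h.2.1 j₀.rev
    have hr := (r j₀.rev).isLt
    have hj₀ : (j₀.rev : ℕ) = n - 1 := by simp [j₀, Fin.val_rev]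
    ext
    show _ = n - 1
    omega
  refine max_le ?_ ?_
  · simpa using h.sum_norm_le_infNorm_of_row (s := {j₀}) (by simpa using hrow₀)
  by_cases hall : ∀ j ∈ S, r j.rev = last
  · have hj₀S : j₀ ∉ S := fun hj => (hS j₀ hj).1 rfl
    calc min (1 + M) (‖a 0‖ + S.card * M) ≤ ‖a 0‖ + S.card * M := min_le_right _ _
      _ = ∑ j ∈ insert j₀ S, ‖a j‖ := by
        rw [Finset.sum_insert hj₀S, Finset.sum_congr rfl fun j hj => (hS j hj).2,
          Finset.sum_const, nsmul_eq_mul]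
      _ ≤ infNorm C := h.sum_norm_le_infNorm_of_row (i := last) (by simpa [hrow₀] using hall)
  · push Not at hall
    obtain ⟨j, hj, hne⟩ := hall
    have hj' : (r j.rev : ℕ) + 1 < n := by
      have := (r j.rev).isLt
      rw [ne_eq, Fin.ext_iff] at hne
      change ¬_ = n - 1 at hne
      omega
    calc min (1 + M) (‖a 0‖ + S.card * M) ≤ 1 + ‖a j‖ := (hS j hj).2 ▸ min_le_left _ _
      _ ≤ infNorm C := h.one_add_norm_le_infNorm j hj'

lemma max_le_NN (h : IsUnitSparseData n m a C r c) {S : Finset (Fin n)} {M : ℝ}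
    (hS : ∀ j ∈ S, (j : ℕ) ≠ 0 ∧ ‖a j‖ = M) :
    max ‖a 0‖ (min (1 + M) (‖a 0‖ + S.card * M)) ≤ NN C :=
  le_min (h.max_le_infNorm hS)
    (oneNorm_eq_infNorm_antitranspose C ▸ h.antitranspose.max_le_infNorm hS)

end IsUnitSparseData

theorem stmt4_general (n : ℕ) (a : ℕ → ℂ) (M : ℝ)
    (hM : IsGreatest ((fun k => ‖a k‖) '' (Set.Icc 1 (n - 1))) M)
    (u : ℕ)
    (hu : u = ((Finset.Icc 1 (n - 1)).filter fun k => ‖a k‖ = M).card)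
    (hex : ∃ C : Matrix (Fin n) (Fin n) ℂ, IsUnitSparse n a C ∧ NN C < NN (Frob n a)) :
    ((u : ℝ) - 1) * M < 1 - ‖a 0‖ := by
  obtain ⟨C, ⟨m, r, c, hC⟩, hlt⟩ := hex
  set S : Finset (Fin n) := {j | (j : ℕ) ≠ 0 ∧ ‖a j‖ = M}
  have hSu : S.card = u := hu ▸ card_fin_filter_eq_card_Icc_filter fun k => ‖a k‖ = M
  have hlow := hC.max_le_NN (S := S) fun j hj => by simpa [S] using hj
  have hF : NN (Frob n a) ≤ max ‖a 0‖ (1 + M) := (min_le_right _ _).trans <|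
    oneNorm_frob_le fun j hj => hM.2 ⟨j, ⟨by omega, by omega⟩, rfl⟩
  by_contra! hgoal
  rw [hSu, min_eq_left (by linarith)] at hlow
  exact hlt.not_ge (hF.trans hlow)

/-- with `M = max{|a_k| : 1 ≤ k ≤ n-1}` and `u` the number of indices
`k ∈ {1, …, n-1}` with `|a_k| = M`, if some unit sparse companion matrix `C` of `p`
satisfies `N(C) < N(F)`, then `(u-1)·M < 1 - |a_0|`. -/
theorem stmt4 (n : ℕ) (hn : 2 ≤ n) (a : ℕ → ℂ) (M : ℝ)
    (hM : IsGreatest ((fun k => ‖a k‖) '' (Set.Icc 1 (n - 1))) M)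
    (u : ℕ)
    (hu : u = ((Finset.Icc 1 (n - 1)).filter fun k => ‖a k‖ = M).card)
    (hex : ∃ C : Matrix (Fin n) (Fin n) ℂ, IsUnitSparse n a C ∧ NN C < NN (Frob n a)) :
    ((u : ℝ) - 1) * M < 1 - ‖a 0‖ :=
  stmt4_general n a M hM u hu hex

end
end

section
/- Let F(p) and F(p♯) be the Frobenius companion matrices of p and of its monic reversal polynomial p♯, respectively. (i) If |a_0| ≥ 1, then N(F(p)) ≤ N(C) for every unit sparse companion matrix C of p in Hessenberg form. (ii) If 0 < |a_0| ≤ 1, then N(F(p♯)) ≤ N(D) for every unit sparse companion matrix D of p♯ in Hessenberg form. -/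
noncomputable section

/-! The column sums of `F(p)` are `|a₀|` and `1 + |a_j|` for `j ≥ 1`. In a unit sparse companion
matrix `C`, the entry `-a₀` sits in the bottom-left corner, and the entry `-a_j` shares its row
with either a superdiagonal `1` or that corner, and likewise its column. So when `|a₀| ≥ 1` every
column sum of `F(p)` is bounded by a row sum and by a column sum of `C`, whence
`N(F(p)) ≤ ‖F(p)‖₁ ≤ min {‖C‖_∞, ‖C‖₁}`. Part (ii) is part (i) for `p♯`, whose constant
coefficient `1/a₀` has modulus at least `1`. -/

open scoped Matrix

variable {n : ℕ}

lemma norm_le_infNorm (A : Matrix (Fin n) (Fin n) ℂ) (i j : Fin n) : ‖A i j‖ ≤ infNorm A :=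
  (Finset.single_le_sum (fun k _ => norm_nonneg (A i k)) (Finset.mem_univ j)).trans <|
    le_ciSup (f := fun i => ∑ j, ‖A i j‖) (Set.finite_range _).bddAbove i

lemma norm_add_norm_le_infNorm (A : Matrix (Fin n) (Fin n) ℂ) (i : Fin n) {j j' : Fin n}
    (h : j ≠ j') : ‖A i j‖ + ‖A i j'‖ ≤ infNorm A :=
  (Finset.add_le_sum (fun k _ => norm_nonneg (A i k)) (Finset.mem_univ j)
    (Finset.mem_univ j') h).trans <|
    le_ciSup (f := fun i => ∑ j, ‖A i j‖) (Set.finite_range _).bddAbove i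

lemma infNorm_nonneg (A : Matrix (Fin n) (Fin n) ℂ) : 0 ≤ infNorm A :=
  Real.iSup_nonneg fun _ => Finset.sum_nonneg fun _ _ => norm_nonneg _

lemma infNorm_transpose_submatrix_rev (A : Matrix (Fin n) (Fin n) ℂ) :
    infNorm (Aᵀ.submatrix Fin.rev Fin.rev) = oneNorm A := by
  unfold infNorm oneNorm
  rw [← Fin.revPerm.iSup_comp]
  refine iSup_congr fun j => ?_
  simp only [Matrix.submatrix_apply, Matrix.transpose_apply, Fin.revPerm_apply, Fin.rev_rev]
  exact Equiv.sum_comp Fin.revPerm (fun i => ‖A i j‖)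

lemma sum_norm_Frob_col (b : ℕ → ℂ) (j : Fin n) :
    ∑ i, ‖Frob n b i j‖ = (if (j : ℕ) = 0 then 0 else 1) + ‖b j‖ := by
  have hj := j.isLt
  let last : Fin n := ⟨n - 1, by omega⟩
  rcases Nat.eq_zero_or_pos j with hj0 | hj0
  · rw [Fintype.sum_eq_single last fun i hi => ?_]
    · simp [Frob, last, hj0]
    · have : (i : ℕ) ≠ n - 1 := fun h => hi (Fin.ext h)
      simp [Frob, hj0, this]
  · let above : Fin n := ⟨j - 1, by omega⟩
    have hne : above ≠ last := fun h => by simp only [Fin.ext_iff, above, last] at h; omega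
    rw [Fintype.sum_eq_add above last hne fun i ⟨h1, h2⟩ => ?_]
    · have : (j : ℕ) ≠ n - 1 + 1 := by omega
      simp [Frob, above, last, if_neg hj0.ne', this, Nat.sub_add_cancel hj0]
    · have : (i : ℕ) ≠ n - 1 := fun h => h2 (Fin.ext h)
      have : (j : ℕ) ≠ i + 1 := fun h => h1 (Fin.ext (by simp only [above]; omega))
      simp [Frob, *]

def HasCompanionEntries (n : ℕ) (b : ℕ → ℂ) (C : Matrix (Fin n) (Fin n) ℂ) : Prop :=
  ∃ r c : Fin n → Fin n, (∀ k, (r k : ℕ) = c k + k) ∧ (∀ k, C (r k) (c k) = -b (n - 1 - k)) ∧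
    ∀ i j : Fin n, (j : ℕ) = i + 1 → C i j = 1

lemma IsUnitSparse.hasCompanionEntries {b : ℕ → ℂ} {C : Matrix (Fin n) (Fin n) ℂ}
    (h : IsUnitSparse n b C) : HasCompanionEntries n b C := by
  obtain ⟨_, r, c, _, hrc, _, _, hcoef, hsup, _⟩ := h
  exact ⟨r, c, hrc, hcoef, hsup⟩

namespace HasCompanionEntries

variable {b : ℕ → ℂ} {C : Matrix (Fin n) (Fin n) ℂ}

/-- The anti-transpose maps the superdiagonal and every subdiagonal onto themselves. -/
lemma transpose_submatrix_rev (h : HasCompanionEntries n b C) :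
    HasCompanionEntries n b (Cᵀ.submatrix Fin.rev Fin.rev) := by
  obtain ⟨r, c, hrc, hcoef, hsup⟩ := h
  refine ⟨fun k => (c k).rev, fun k => (r k).rev, fun k => ?_, fun k => ?_, fun i j hij => ?_⟩
  · have := hrc k
    have := (r k).isLt
    simp only [Fin.val_rev]
    omega
  · simpa using hcoef k
  · refine hsup _ _ ?_
    simp only [Fin.val_rev]
    omega

lemma sum_norm_Frob_col_le_infNorm (h : HasCompanionEntries n b C) (hb : 1 ≤ ‖b 0‖)
    (j : Fin n) : ∑ i, ‖Frob n b i j‖ ≤ infNorm C := by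
  obtain ⟨r, c, hrc, hcoef, hsup⟩ := h
  have hj := j.isLt
  let last : Fin n := ⟨n - 1, by omega⟩
  have hlast : (r last : ℕ) = n - 1 ∧ (c last : ℕ) = 0 := by
    have := hrc last
    have := (r last).isLt
    simp only [last] at *
    omega
  have hcorner : C last (c last) = -b 0 := by
    simpa [show r last = last from Fin.ext hlast.1, last] using hcoef last
  let k : Fin n := ⟨n - 1 - j, by omega⟩
  have hk : C (r k) (c k) = -b j := by
    rw [hcoef k, show n - 1 - (k : ℕ) = j by simp only [k]; omega]
  rw [sum_norm_Frob_col]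
  rcases Nat.eq_zero_or_pos j with hj0 | hj0
  · simpa [hj0, hk] using norm_le_infNorm C (r k) (c k)
  obtain ⟨j', hj', hone⟩ : ∃ j', j' ≠ c k ∧ 1 ≤ ‖C (r k) j'‖ := by
    by_cases hr : r k = last
    · refine ⟨c last, fun h => ?_, by rwa [hr, hcorner, norm_neg]⟩
      have := hrc k
      simp only [hr, last, k, ← h, hlast.2] at this
      omega
    · have hlt : (r k : ℕ) + 1 < n := by
        have := (r k).isLt; have : (r k : ℕ) ≠ n - 1 := fun h => hr (Fin.ext h); omega
      refine ⟨⟨r k + 1, hlt⟩, fun h => ?_, by rw [hsup _ _ rfl, norm_one]⟩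
      have := hrc k
      simp only [← h] at this
      omega
  calc (if (j : ℕ) = 0 then 0 else 1) + ‖b j‖ ≤ ‖C (r k) j'‖ + ‖C (r k) (c k)‖ := by
        rw [if_neg hj0.ne', hk, norm_neg]; linarith
    _ ≤ infNorm C := norm_add_norm_le_infNorm C (r k) hj'

lemma oneNorm_Frob_le_NN (h : HasCompanionEntries n b C) (hb : 1 ≤ ‖b 0‖) :
    oneNorm (Frob n b) ≤ NN C := by
  have key : ∀ C : Matrix (Fin n) (Fin n) ℂ, HasCompanionEntries n b C →
      oneNorm (Frob n b) ≤ infNorm C := fun C hC =>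
    Real.iSup_le (hC.sum_norm_Frob_col_le_infNorm hb) (infNorm_nonneg C)
  exact le_min (key C h) (infNorm_transpose_submatrix_rev C ▸ key _ h.transpose_submatrix_rev)

end HasCompanionEntries

theorem stmt9_general (n : ℕ) (a : ℕ → ℂ) :
    (1 ≤ ‖a 0‖ →
      ∀ C : Matrix (Fin n) (Fin n) ℂ, IsUnitSparse n a C →
        NN (Frob n a) ≤ NN C) ∧
    (0 < ‖a 0‖ → ‖a 0‖ ≤ 1 →
      ∀ D : Matrix (Fin n) (Fin n) ℂ, IsUnitSparse n (asharp n a) D →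
        NN (Frob n (asharp n a)) ≤ NN D) := by
  have key (b : ℕ → ℂ) (hb : 1 ≤ ‖b 0‖) (C : Matrix (Fin n) (Fin n) ℂ)
      (hC : IsUnitSparse n b C) : NN (Frob n b) ≤ NN C :=
    (min_le_right _ _).trans (hC.hasCompanionEntries.oneNorm_Frob_le_NN hb)
  refine ⟨key a, fun h0 h1 => key _ ?_⟩
  rw [asharp, if_pos rfl, norm_div, norm_one]
  exact (one_le_div h0).mpr h1

/-- (i) if `|a_0| ≥ 1` then `N(F(p)) ≤ N(C)` for every unit sparse
companion matrix `C` of `p`; (ii) if `0 < |a_0| ≤ 1` then `N(F(p♯)) ≤ N(D)` for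
every unit sparse companion matrix `D` of `p♯`. -/
theorem stmt9 (n : ℕ) (hn : 2 ≤ n) (a : ℕ → ℂ) :
    (1 ≤ ‖a 0‖ →
      ∀ C : Matrix (Fin n) (Fin n) ℂ, IsUnitSparse n a C →
        NN (Frob n a) ≤ NN C) ∧
    (0 < ‖a 0‖ → ‖a 0‖ ≤ 1 →
      ∀ D : Matrix (Fin n) (Fin n) ℂ, IsUnitSparse n (asharp n a) D →
        NN (Frob n (asharp n a)) ≤ NN D) :=
  stmt9_general n a

end
end
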